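/- Let m ≥ 3 be an odd integer and let Ŵ⁺ be the group with presentation ⟨z, s₀, s₁, s_m | z² = s₀² = s₁² = s_m² = (s₁s_m)^m = 1, (s₀s₁)² = (s₀s_m)² = z, z s_i = s_i z for i ∈ {0,1,m}⟩. Then, up to isomorphism, Ŵ⁺ has exactly 2m + 3 irreducible finite-dimensional complex representations; every such representation has dimension 1 or 2, exactly 4 of them have dimension 1, and exactly 2m − 1 of them have dimension 2. -/

import Mathlib

/-!
Write `rot = s₁ sₘ`. The relations make `z` central with `z² = 1`, and give `rot ^ m = 1`,
`s₀ rot = rot s₀`, `s₁ rot s₁ = rot⁻¹` and `s₀ s₁ = z s₁ s₀`. On an irreducible representation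
`z` acts by a sign `e`. If `w` is a common eigenvector of `rot` and `s₀`, with eigenvalues `t` and
`c`, then `s₁ w` is one with eigenvalues `t⁻¹` and `e c`, so `w` and `s₁ w` span the
representation. If some vector is an eigenvector of every generator, the representation is a
character, determined by the signs of `s₀` and `s₁` (as `m` is odd, `rot` acts trivially).
Otherwise `(w, s₁ w)` is a basis in which the generators act by the matrices of `rep2 t c (e c)`.
Exchanging `w` and `s₁ w` normalises the parameters, `ζ` being a primitive `m`-th root of unity:
`t = ζ ^ (k + 1)` with `k < (m - 1) / 2` when `e = 1` (then `t ≠ 1`, since otherwise `w + s₁ w`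
would be an eigenvector of every generator), and `c = 1` when `e = -1`. The traces of `z`, `s₀`,
`rot` and `s₀ rot` separate the resulting `(m - 1) + m` two-dimensional representations.
-/

/-- Generators of the double covering of `W = ℤ₂ × D_{2m}`: the central element `z`
and the lifted reflections `s₀`, `s₁`, `s_m`. -/
inductive Gen : Type
  | z | s0 | s1 | sm
deriving DecidableEq

open FreeGroup

/-- Relators of the positive double covering `Ŵ⁺` of `ℤ₂ × D_{2m}` for odd `m`. -/
def relsOddPos (m : ℕ) : Set (FreeGroup Gen) :=
  { (of Gen.z) ^ 2, (of Gen.s0) ^ 2, (of Gen.s1) ^ 2, (of Gen.sm) ^ 2,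
    (of Gen.s1 * of Gen.sm) ^ m,
    (of Gen.s0 * of Gen.s1) ^ 2 * (of Gen.z)⁻¹,
    (of Gen.s0 * of Gen.sm) ^ 2 * (of Gen.z)⁻¹,
    of Gen.z * of Gen.s0 * (of Gen.z)⁻¹ * (of Gen.s0)⁻¹,
    of Gen.z * of Gen.s1 * (of Gen.z)⁻¹ * (of Gen.s1)⁻¹,
    of Gen.z * of Gen.sm * (of Gen.z)⁻¹ * (of Gen.sm)⁻¹ }

/-- A representation is irreducible if the space is nonzero and the only invariant
subspaces are `⊥` and `⊤`. -/
def IsIrreducibleRep {G : Type*} [Group G] {V : Type*} [AddCommGroup V] [Module ℂ V]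
    (ρ : Representation ℂ G V) : Prop :=
  Nontrivial V ∧ ∀ U : Submodule ℂ V, (∀ g : G, ∀ x ∈ U, ρ g x ∈ U) → U = ⊥ ∨ U = ⊤

/-- Isomorphism of representations. -/
def RepIso {G : Type*} [Group G] {V W : Type*} [AddCommGroup V] [Module ℂ V]
    [AddCommGroup W] [Module ℂ W]
    (ρ : Representation ℂ G V) (σ : Representation ℂ G W) : Prop :=
  ∃ e : V ≃ₗ[ℂ] W, ∀ g v, e (ρ g v) = σ g (e v)

lemma Matrix.fin_two_eq_iff {α : Type*} {a b c d a' b' c' d' : α} :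
    !![a, b; c, d] = !![a', b'; c', d'] ↔ a = a' ∧ b = b' ∧ c = c' ∧ d = d' := by
  simp [and_assoc]

lemma Module.End.exists_common_eigenvector {V : Type*} [AddCommGroup V] [Module ℂ V]
    [FiniteDimensional ℂ V] [Nontrivial V] {A B : Module.End ℂ V} (hAB : Commute A B) :
    ∃ w ≠ 0, ∃ a b : ℂ, A w = a • w ∧ B w = b • w := by
  obtain ⟨a, ha⟩ := Module.End.exists_eigenvalue A
  have hE : Set.MapsTo B (A.eigenspace a) (A.eigenspace a) :=
    Module.End.mapsTo_genEigenspace_of_comm hAB a 1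
  have : Nontrivial (A.eigenspace a) := Submodule.nontrivial_iff_ne_bot.2 ha
  obtain ⟨b, hb⟩ := Module.End.exists_eigenvalue (B.restrict hE)
  obtain ⟨⟨w, hwA⟩, hw⟩ := hb.exists_hasEigenvector
  exact ⟨w, by simpa using hw.2, a, b, Module.End.mem_eigenspace_iff.1 hwA,
    congrArg Subtype.val hw.apply_eq_smul⟩

lemma eq_or_mul_eq_one_of_add_inv_eq {K : Type*} [Field K] {x y : K} (hx : x ≠ 0) (hy : y ≠ 0)
    (h : x + x⁻¹ = y + y⁻¹) : x = y ∨ x * y = 1 := by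
  have : (x - y) * (x * y - 1) = 0 := by
    field_simp at h
    linear_combination h
  rcases mul_eq_zero.1 this with h | h
  exacts [.inl (sub_eq_zero.1 h), .inr (sub_eq_zero.1 h)]

lemma unitsInt_cast_sq (ε : ℤˣ) : (ε : ℂ) ^ 2 = 1 := by
  rw [← Int.cast_pow, ← Units.val_pow_eq_pow_val, Int.units_sq, Units.val_one, Int.cast_one]

lemma exists_unitsInt_cast_eq {c : ℂ} (hc : c ^ 2 = 1) : ∃ ε : ℤˣ, (ε : ℂ) = c := by
  rcases sq_eq_one_iff.1 hc with rfl | rfl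
  exacts [⟨1, by simp⟩, ⟨-1, by simp⟩]

namespace IsPrimitiveRoot

variable {m : ℕ} {ζ : ℂ}

lemma pow_pow_eq_one (hζ : IsPrimitiveRoot ζ m) (k : ℕ) : (ζ ^ k) ^ m = 1 := by
  rw [← pow_mul, mul_comm, pow_mul, hζ.pow_eq_one, one_pow]

lemma exists_pow_eq_or_inv_eq (hζ : IsPrimitiveRoot ζ m) (hodd : Odd m) {t : ℂ}
    (ht : t ^ m = 1) (ht₁ : t ≠ 1) : ∃ k < (m - 1) / 2, t = ζ ^ (k + 1) ∨ t⁻¹ = ζ ^ (k + 1) := by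
  have : NeZero m := ⟨hodd.pos.ne'⟩
  obtain ⟨i, hi, rfl⟩ := hζ.eq_pow_of_pow_eq_one ht
  have hi₀ : i ≠ 0 := by rintro rfl; exact ht₁ (pow_zero ζ)
  obtain ⟨p, rfl⟩ := hodd
  by_cases hip : i ≤ p
  · exact ⟨i - 1, by omega, .inl (by rw [Nat.sub_add_cancel (by omega)])⟩
  · refine ⟨2 * p + 1 - i - 1, by omega, .inr ?_⟩
    rw [Nat.sub_add_cancel (by omega), eq_comm,
      ← mul_eq_one_iff_eq_inv₀ (pow_ne_zero _ (hζ.ne_zero (NeZero.ne _))), ← pow_add,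
      Nat.sub_add_cancel hi.le, hζ.pow_eq_one]

lemma eq_of_pow_succ_add_inv_eq (hζ : IsPrimitiveRoot ζ m) {a b : ℕ} (ha : a < (m - 1) / 2)
    (hb : b < (m - 1) / 2)
    (h : ζ ^ (a + 1) + (ζ ^ (a + 1))⁻¹ = ζ ^ (b + 1) + (ζ ^ (b + 1))⁻¹) : a = b := by
  have hζ₀ : ζ ≠ 0 := hζ.ne_zero (by omega)
  rcases eq_or_mul_eq_one_of_add_inv_eq (pow_ne_zero _ hζ₀) (pow_ne_zero _ hζ₀) h with h | h
  · have := hζ.pow_inj (by omega) (by omega) h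
    omega
  · rw [← pow_add, hζ.pow_eq_one_iff_dvd] at h
    have := Nat.le_of_dvd (by omega) h
    omega

end IsPrimitiveRoot

section Representation

variable {G : Type*} [Group G] {V W : Type*} [AddCommGroup V] [Module ℂ V]
  [AddCommGroup W] [Module ℂ W] {ρ : Representation ℂ G V} {σ : Representation ℂ G W}

lemma RepIso.finrank_eq (h : RepIso ρ σ) : Module.finrank ℂ V = Module.finrank ℂ W :=
  let ⟨e, _⟩ := h; e.finrank_eq

lemma RepIso.trace_eq (h : RepIso ρ σ) (g : G) :
    LinearMap.trace ℂ V (ρ g) = LinearMap.trace ℂ W (σ g) := by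
  obtain ⟨e, he⟩ := h
  have : σ g = e.conj (ρ g) := by
    ext w
    simp [LinearEquiv.conj_apply, he]
  rw [this, LinearMap.trace_conj']

lemma isIrreducibleRep_of_finrank_eq_one (h : Module.finrank ℂ V = 1) : IsIrreducibleRep ρ := by
  have : IsSimpleModule ℂ V := isSimpleModule_iff_finrank_eq_one.2 h
  exact ⟨Module.nontrivial_of_finrank_eq_succ h, fun U _ => eq_bot_or_eq_top U⟩

lemma isIrreducibleRep_of_finrank_eq_two (h : Module.finrank ℂ V = 2)
    (hρ : ∀ x : V, x ≠ 0 → ∃ g, ∀ a : ℂ, ρ g x ≠ a • x) : IsIrreducibleRep ρ := by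
  have : FiniteDimensional ℂ V := Module.finite_of_finrank_eq_succ h
  refine ⟨Module.nontrivial_of_finrank_eq_succ h, fun U hU => ?_⟩
  by_contra! hne
  have hU₁ : Module.finrank ℂ U = 1 := by
    have := Submodule.finrank_lt hne.2
    have := Submodule.one_le_finrank_iff.2 hne.1
    omega
  obtain ⟨⟨x, hxU⟩, hx, hspan⟩ := finrank_eq_one_iff'.1 hU₁
  obtain ⟨g, hg⟩ := hρ x (by simpa using hx)
  obtain ⟨a, ha⟩ := hspan ⟨_, hU g x hxU⟩
  exact hg a (by simpa using (congrArg Subtype.val ha).symm)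

lemma apply_mul_of_eq_smul {g h : G} {x : V} {a b : ℂ} (hg : ρ g x = a • x)
    (hh : ρ h x = b • x) : ρ (g * h) x = (a * b) • x := by
  rw [_root_.map_mul, Module.End.mul_apply, hh, map_smul, hg, smul_smul, mul_comm]

lemma apply_pow_of_eq_smul {g : G} {x : V} {a : ℂ} (hg : ρ g x = a • x) (n : ℕ) :
    ρ (g ^ n) x = a ^ n • x := by
  induction n with
  | zero => simp
  | succ n ih => rw [pow_succ, apply_mul_of_eq_smul ih hg, pow_succ]

lemma eq_of_apply_eq_smul {g : G} {x : V} {a b : ℂ} (hx : x ≠ 0) (ha : ρ g x = a • x)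
    (hb : ρ g x = b • x) : a = b :=
  smul_left_injective ℂ hx (ha.symm.trans hb)

end Representation

lemma repIso_of_generators {α : Type*} {rels : Set (FreeGroup α)} {V W : Type*}
    [AddCommGroup V] [Module ℂ V] [AddCommGroup W] [Module ℂ W]
    {ρ : Representation ℂ (PresentedGroup rels) V} {σ : Representation ℂ (PresentedGroup rels) W}
    (e : V ≃ₗ[ℂ] W) (h : ∀ y v, e (ρ (.of y) v) = σ (.of y) (e v)) : RepIso ρ σ := by
  -- `PresentedGroup.ext` needs a group as codomain, hence the detour through units.
  have : ((e.conjRingEquiv : Module.End ℂ V →* Module.End ℂ W).comp ρ).toHomUnits =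
      σ.toHomUnits :=
    PresentedGroup.ext fun y => Units.ext <| LinearMap.ext fun w => by simp [h]
  refine ⟨e, fun g v => ?_⟩
  simpa using LinearMap.congr_fun (congrArg (fun f => (f g : Module.End ℂ W)) this) (e v)

namespace WposOdd

abbrev Wpos (m : ℕ) := PresentedGroup (relsOddPos m)

variable {m : ℕ}

abbrev z : Wpos m := .of Gen.z
abbrev s₀ : Wpos m := .of Gen.s0
abbrev s₁ : Wpos m := .of Gen.s1
abbrev sₘ : Wpos m := .of Gen.sm

def rot : Wpos m := s₁ * sₘ

lemma mk_eq_one_of_mem_rels {r : FreeGroup Gen} (h : r ∈ relsOddPos m) :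
    PresentedGroup.mk (relsOddPos m) r = 1 :=
  (QuotientGroup.eq_one_iff r).2 (Subgroup.subset_normalClosure h)

lemma of_sq (y : Gen) : (PresentedGroup.of y : Wpos m) ^ 2 = 1 := by
  cases y <;> exact mk_eq_one_of_mem_rels (by simp [relsOddPos])

lemma of_mul_self (y : Gen) : (.of y : Wpos m) * .of y = 1 := by rw [← sq, of_sq]

lemma of_mul_of_mul (y : Gen) (g : Wpos m) : .of y * (.of y * g) = g := by
  rw [← mul_assoc, of_mul_self, one_mul]

lemma of_inv (y : Gen) : (PresentedGroup.of y : Wpos m)⁻¹ = .of y :=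
  inv_eq_of_mul_eq_one_right (of_mul_self y)

lemma z_mul_of (y : Gen) : (z : Wpos m) * .of y = .of y * z := by
  have h : (z : Wpos m) * .of y * z⁻¹ * (.of y)⁻¹ = 1 := by
    cases y
    · simp
    all_goals exact mk_eq_one_of_mem_rels (by simp [relsOddPos])
  rwa [mul_inv_eq_one, mul_inv_eq_iff_eq_mul] at h

lemma rot_pow : (rot : Wpos m) ^ m = 1 := mk_eq_one_of_mem_rels (by simp [relsOddPos])

lemma s₀_mul_s₁_sq : ((s₀ : Wpos m) * s₁) ^ 2 = z :=
  mul_inv_eq_one.1 (mk_eq_one_of_mem_rels (by simp [relsOddPos]))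

lemma s₀_mul_sₘ_sq : ((s₀ : Wpos m) * sₘ) ^ 2 = z :=
  mul_inv_eq_one.1 (mk_eq_one_of_mem_rels (by simp [relsOddPos]))

lemma s₀_mul_s₁ : (s₀ : Wpos m) * s₁ = z * (s₁ * s₀) := by
  simp only [← s₀_mul_s₁_sq, sq, mul_assoc, of_mul_of_mul, of_mul_self, mul_one]

lemma s₀_mul_sₘ : (s₀ : Wpos m) * sₘ = z * (sₘ * s₀) := by
  simp only [← s₀_mul_sₘ_sq, sq, mul_assoc, of_mul_of_mul, of_mul_self, mul_one]

lemma s₀_mul_rot : (s₀ : Wpos m) * rot = rot * s₀ := by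
  rw [rot, ← mul_assoc, s₀_mul_s₁, mul_assoc, mul_assoc, s₀_mul_sₘ, ← mul_assoc s₁, ← z_mul_of]
  simp only [mul_assoc, of_mul_of_mul]

lemma rot_inv : (rot : Wpos m)⁻¹ = sₘ * s₁ := by
  rw [rot, mul_inv_rev, of_inv, of_inv]

lemma sₘ_eq_s₁_mul_rot : (sₘ : Wpos m) = s₁ * rot := by
  rw [rot, of_mul_of_mul]

lemma rot_mul_s₁ : (rot : Wpos m) * s₁ = s₁ * rot⁻¹ := by
  rw [rot_inv, rot, mul_assoc, ← mul_assoc]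

/-- The generators are involutions, so the defining relations make sense in any monoid. -/
structure Solution (m : ℕ) (M : Type*) [Monoid M] where
  gen : Gen → M
  gen_sq : ∀ y, gen y ^ 2 = 1
  rot_pow : (gen .s1 * gen .sm) ^ m = 1
  s₀_mul_s₁_sq : (gen .s0 * gen .s1) ^ 2 = gen .z
  s₀_mul_sₘ_sq : (gen .s0 * gen .sm) ^ 2 = gen .z
  z_commute : ∀ y, Commute (gen .z) (gen y)

namespace Solution

variable {M : Type*} [Monoid M] (S : Solution m M)

def unit (y : Gen) : Mˣ :=
  ⟨S.gen y, S.gen y, by rw [← sq, S.gen_sq], by rw [← sq, S.gen_sq]⟩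

lemma lift_rels : ∀ r ∈ relsOddPos m, FreeGroup.lift S.unit r = 1 := by
  have hval (y : Gen) : (S.unit y : M) = S.gen y := rfl
  simp only [relsOddPos, Set.mem_insert_iff, Set.mem_singleton_iff]
  rintro r (rfl | rfl | rfl | rfl | rfl | rfl | rfl | rfl | rfl | rfl) <;>
    simp [mul_inv_eq_iff_eq_mul, Units.ext_iff, hval, S.gen_sq, S.rot_pow,
      S.s₀_mul_s₁_sq, S.s₀_mul_sₘ_sq, (S.z_commute _).eq]

def lift : Wpos m →* M := (Units.coeHom M).comp (PresentedGroup.toGroup S.lift_rels)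

@[simp]
lemma lift_of (y : Gen) : S.lift (.of y) = S.gen y := by
  simp [lift, unit]

end Solution

section OneDim

variable (a₀ a₁ : ℂ) (h₀ : a₀ ^ 2 = 1) (h₁ : a₁ ^ 2 = 1)

def character : Wpos m →* ℂ :=
  Solution.lift
    { gen := fun | .z => 1 | .s0 => a₀ | .s1 => a₁ | .sm => a₁
      gen_sq := fun y => by cases y <;> simp [h₀, h₁]
      rot_pow := by simp [← sq, h₁]
      s₀_mul_s₁_sq := by simp [mul_pow, h₀, h₁]
      s₀_mul_sₘ_sq := by simp [mul_pow, h₀, h₁]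
      z_commute := fun _ => Commute.all _ _ }

def rep1 : Representation ℂ (Wpos m) (Fin 1 → ℂ) :=
  (algebraMap ℂ (Module.End ℂ (Fin 1 → ℂ))).toMonoidHom.comp (character a₀ a₁ h₀ h₁)

lemma rep1_apply (g : Wpos m) (v : Fin 1 → ℂ) :
    rep1 a₀ a₁ h₀ h₁ g v = character a₀ a₁ h₀ h₁ g • v :=
  rfl

lemma trace_rep1 (g : Wpos m) :
    LinearMap.trace ℂ _ (rep1 a₀ a₁ h₀ h₁ g) = character a₀ a₁ h₀ h₁ g := by
  simp [rep1, Module.algebraMap_end_eq_smul_id]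

lemma character_s₀ : character (m := m) a₀ a₁ h₀ h₁ s₀ = a₀ := Solution.lift_of _ _

lemma character_s₁ : character (m := m) a₀ a₁ h₀ h₁ s₁ = a₁ := Solution.lift_of _ _

end OneDim

lemma eq_of_repIso_rep1 {a₀ a₁ b₀ b₁ : ℂ} {h₀ : a₀ ^ 2 = 1} {h₁ : a₁ ^ 2 = 1} {g₀ : b₀ ^ 2 = 1}
    {g₁ : b₁ ^ 2 = 1} (h : RepIso (rep1 (m := m) a₀ a₁ h₀ h₁) (rep1 b₀ b₁ g₀ g₁)) :
    a₀ = b₀ ∧ a₁ = b₁ := by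
  have htr := h.trace_eq
  exact ⟨by simpa [trace_rep1, character_s₀] using htr s₀,
    by simpa [trace_rep1, character_s₁] using htr s₁⟩

section TwoDim

variable [NeZero m] (t c c' : ℂ) (ht : t ^ m = 1) (hc : c ^ 2 = 1) (hc' : c' ^ 2 = 1)

/-- The action in the basis `(w, s₁ w)`, where `w` is an eigenvector of `rot` and `s₀` with
eigenvalues `t` and `c`, and `c'` is the eigenvalue of `s₀` on `s₁ w`. -/
noncomputable def matrixSolution : Solution m (Matrix (Fin 2) (Fin 2) ℂ) where
  gen := fun
    | .z => !![c * c', 0; 0, c * c']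
    | .s0 => !![c, 0; 0, c']
    | .s1 => !![0, 1; 1, 0]
    | .sm => !![0, t⁻¹; t, 0]
  gen_sq := by
    have : t ≠ 0 := (IsUnit.of_pow_eq_one ht (NeZero.ne m)).ne_zero
    rintro (_ | _ | _ | _) <;>
      simp only [sq, Matrix.mul_fin_two, Matrix.one_fin_two, Matrix.fin_two_eq_iff] at hc hc' ⊢ <;>
      grind
  rot_pow := by
    have : (!![0, 1; 1, 0] * !![0, t⁻¹; t, 0] : Matrix (Fin 2) (Fin 2) ℂ) =
        Matrix.diagonal ![t, t⁻¹] := by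
      rw [Matrix.mul_fin_two, Matrix.diagonal_fin_two]
      simp
    rw [this, Matrix.diagonal_pow, ← Matrix.diagonal_one]
    congr 1
    ext i; fin_cases i <;> simp [ht]
  s₀_mul_s₁_sq := by
    simp only [sq, Matrix.mul_fin_two, Matrix.fin_two_eq_iff] at hc hc' ⊢
    grind
  s₀_mul_sₘ_sq := by
    have : t ≠ 0 := (IsUnit.of_pow_eq_one ht (NeZero.ne m)).ne_zero
    simp only [sq, Matrix.mul_fin_two, Matrix.fin_two_eq_iff] at hc hc' ⊢
    grind
  z_commute := by
    rintro (_ | _ | _ | _) <;>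
      simp only [Commute, SemiconjBy, Matrix.mul_fin_two, Matrix.fin_two_eq_iff] <;> grind

noncomputable def rep2 : Representation ℂ (Wpos m) (Fin 2 → ℂ) :=
  Matrix.toLinAlgEquiv'.toMonoidHom.comp (matrixSolution t c c' ht hc hc').lift

lemma rep2_apply (g : Wpos m) (v : Fin 2 → ℂ) :
    rep2 t c c' ht hc hc' g v = ((matrixSolution t c c' ht hc hc').lift g).mulVec v :=
  rfl

lemma trace_rep2 (g : Wpos m) : LinearMap.trace ℂ _ (rep2 t c c' ht hc hc' g) =
    ((matrixSolution t c c' ht hc hc').lift g).trace :=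
  Matrix.trace_toLin'_eq _

lemma matrixSolution_lift_z :
    (matrixSolution t c c' ht hc hc').lift z = !![c * c', 0; 0, c * c'] :=
  Solution.lift_of _ _

lemma matrixSolution_lift_s₀ : (matrixSolution t c c' ht hc hc').lift s₀ = !![c, 0; 0, c'] :=
  Solution.lift_of _ _

lemma matrixSolution_lift_s₁ : (matrixSolution t c c' ht hc hc').lift s₁ = !![0, 1; 1, 0] :=
  Solution.lift_of _ _

lemma matrixSolution_lift_sₘ : (matrixSolution t c c' ht hc hc').lift sₘ = !![0, t⁻¹; t, 0] :=
  Solution.lift_of _ _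

lemma matrixSolution_lift_rot :
    (matrixSolution t c c' ht hc hc').lift rot = !![t, 0; 0, t⁻¹] := by
  rw [rot, _root_.map_mul, matrixSolution_lift_s₁, matrixSolution_lift_sₘ, Matrix.mul_fin_two]
  simp

lemma trace_rep2_z : LinearMap.trace ℂ _ (rep2 t c c' ht hc hc' z) = 2 * (c * c') := by
  rw [trace_rep2, matrixSolution_lift_z, Matrix.trace_fin_two_of, two_mul]

lemma trace_rep2_s₀ : LinearMap.trace ℂ _ (rep2 t c c' ht hc hc' s₀) = c + c' := by
  rw [trace_rep2, matrixSolution_lift_s₀, Matrix.trace_fin_two_of]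

lemma trace_rep2_rot : LinearMap.trace ℂ _ (rep2 t c c' ht hc hc' rot) = t + t⁻¹ := by
  rw [trace_rep2, matrixSolution_lift_rot, Matrix.trace_fin_two_of]

lemma trace_rep2_s₀_mul_rot :
    LinearMap.trace ℂ _ (rep2 t c c' ht hc hc' (s₀ * rot)) = c * t + c' * t⁻¹ := by
  rw [trace_rep2, _root_.map_mul, matrixSolution_lift_s₀, matrixSolution_lift_rot,
    Matrix.mul_fin_two, Matrix.trace_fin_two_of]
  ring

lemma rep2_isIrreducible (h : c ≠ c' ∨ t ≠ t⁻¹) : IsIrreducibleRep (rep2 t c c' ht hc hc') := by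
  refine isIrreducibleRep_of_finrank_eq_two (Module.finrank_fin_fun ℂ) fun x hx => ?_
  by_contra! hx_eig
  obtain ⟨a, ha⟩ := hx_eig s₁
  obtain ⟨b, hb⟩ := hx_eig s₀
  obtain ⟨d, hd⟩ := hx_eig rot
  simp only [rep2_apply, matrixSolution_lift_s₁, matrixSolution_lift_s₀, matrixSolution_lift_rot,
    Matrix.mulVec_fin_two, funext_iff, Fin.forall_fin_two, Matrix.of_apply, Matrix.cons_val_zero,
    Matrix.cons_val_one, Pi.smul_apply, smul_eq_mul, zero_mul, one_mul, zero_add,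
    add_zero] at ha hb hd
  have hx₀ : x 0 ≠ 0 := fun h₀ => hx <| funext <| Fin.forall_fin_two.2 ⟨h₀, by simp [ha.1, h₀]⟩
  have hx₁ : x 1 ≠ 0 := fun h₁ => hx <| funext <| Fin.forall_fin_two.2 ⟨by simp [ha.2, h₁], h₁⟩
  rcases h with h | h
  · exact h ((mul_right_cancel₀ hx₀ hb.1).trans (mul_right_cancel₀ hx₁ hb.2).symm)
  · exact h ((mul_right_cancel₀ hx₀ hd.1).trans (mul_right_cancel₀ hx₁ hd.2).symm)

end TwoDim

lemma traces_eq_of_repIso_rep2 [NeZero m] {t c c' s d d' : ℂ} {ht : t ^ m = 1}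
    {hc : c ^ 2 = 1} {hc' : c' ^ 2 = 1} {hs : s ^ m = 1} {hd : d ^ 2 = 1} {hd' : d' ^ 2 = 1}
    (h : RepIso (rep2 t c c' ht hc hc') (rep2 s d d' hs hd hd')) :
    c * c' = d * d' ∧ c + c' = d + d' ∧ t + t⁻¹ = s + s⁻¹ ∧
      c * t + c' * t⁻¹ = d * s + d' * s⁻¹ := by
  have htr := h.trace_eq
  have hz := htr z
  have h₀ := htr s₀
  have hr := htr rot
  have h₀r := htr (s₀ * rot)
  rw [trace_rep2_z, trace_rep2_z] at hz
  rw [trace_rep2_s₀, trace_rep2_s₀] at h₀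
  rw [trace_rep2_rot, trace_rep2_rot] at hr
  rw [trace_rep2_s₀_mul_rot, trace_rep2_s₀_mul_rot] at h₀r
  exact ⟨mul_left_cancel₀ two_ne_zero hz, h₀, hr, h₀r⟩

section Representation

variable {V : Type*} [AddCommGroup V] [Module ℂ V] {σ : Representation ℂ (Wpos m) V}

def HasCommonEigenvector (σ : Representation ℂ (Wpos m) V) : Prop :=
  ∃ x ≠ 0, ∀ y, ∃ a : ℂ, σ (.of y) x = a • x

lemma map_mem_of_generators {U : Submodule ℂ V} (hU : ∀ y, ∀ x ∈ U, σ (.of y) x ∈ U)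
    (g : Wpos m) : ∀ x ∈ U, σ g x ∈ U := by
  have hg : g ∈ Subgroup.closure (Set.range PresentedGroup.of) := by
    rw [PresentedGroup.closure_range_of]; trivial
  induction hg using Subgroup.closure_induction'' with
  | mem _ h => obtain ⟨y, rfl⟩ := h; exact hU y
  | inv_mem _ h => obtain ⟨y, rfl⟩ := h; rw [of_inv]; exact hU y
  | one => simp
  | mul g h _ _ hg hh => intro x hx; simpa using hg _ (hh x hx)

lemma eq_top_of_generators (hσ : IsIrreducibleRep σ) {U : Submodule ℂ V} (hU₀ : U ≠ ⊥)
    (hU : ∀ y, ∀ x ∈ U, σ (.of y) x ∈ U) : U = ⊤ :=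
  (hσ.2 U (map_mem_of_generators hU)).resolve_left hU₀

lemma exists_z_eq_smul [FiniteDimensional ℂ V] (hσ : IsIrreducibleRep σ) :
    ∃ e : ℂ, ∀ v, σ z v = e • v := by
  have := hσ.1
  obtain ⟨e, he⟩ := Module.End.exists_eigenvalue (σ z)
  have htop : Module.End.eigenspace (σ z) e = ⊤ := by
    refine eq_top_of_generators hσ he fun y x hx => ?_
    rw [Module.End.mem_eigenspace_iff] at hx ⊢
    rw [← Module.End.mul_apply, ← _root_.map_mul, z_mul_of, _root_.map_mul, Module.End.mul_apply,
      hx, map_smul]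
  exact ⟨e, fun v => Module.End.mem_eigenspace_iff.1 (htop ▸ Submodule.mem_top)⟩

lemma repIso_of_linearIndependent {n : ℕ} [NeZero n] (hσ : IsIrreducibleRep σ)
    {ρ : Representation ℂ (Wpos m) (Fin n → ℂ)} {v : Fin n → V} (hv : LinearIndependent ℂ v)
    (h : ∀ y a, Fintype.linearCombination ℂ v (ρ (.of y) a) =
      σ (.of y) (Fintype.linearCombination ℂ v a)) :
    RepIso ρ σ := by
  have hinj := hv.fintypeLinearCombination_injective
  have hrange : LinearMap.range (Fintype.linearCombination ℂ v) = ⊤ := by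
    refine eq_top_of_generators hσ ?_ fun y x ⟨a, ha⟩ => ⟨ρ (.of y) a, by rw [h, ha]⟩
    rw [Ne, LinearMap.range_eq_bot]
    intro h0
    have := hinj (a₁ := Pi.single 0 1) (a₂ := 0) (by simp [h0])
    simpa using congrFun this 0
  exact repIso_of_generators
    (LinearEquiv.ofBijective _ ⟨hinj, LinearMap.range_eq_top.1 hrange⟩) h

lemma exists_repIso_rep1 (hodd : Odd m) (hσ : IsIrreducibleRep σ)
    (h : HasCommonEigenvector σ) :
    ∃ a₀ a₁ h₀ h₁, RepIso (rep1 (m := m) a₀ a₁ h₀ h₁) σ := by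
  obtain ⟨x, hx, hx_eig⟩ := h
  choose l hl using hx_eig
  have hsq (y : Gen) : l y ^ 2 = 1 :=
    eq_of_apply_eq_smul hx (apply_pow_of_eq_smul (hl y) 2) (by simp [of_sq])
  have hz : l .z = 1 := by
    have := eq_of_apply_eq_smul hx (hl .z)
      (s₀_mul_s₁_sq ▸ apply_pow_of_eq_smul (apply_mul_of_eq_smul (hl .s0) (hl .s1)) 2)
    rw [this, mul_pow, hsq, hsq, one_mul]
  have hrot : l .s1 * l .sm = 1 := by
    have hpow : (l .s1 * l .sm) ^ m = 1 :=
      eq_of_apply_eq_smul hx (apply_pow_of_eq_smul (apply_mul_of_eq_smul (hl .s1) (hl .sm)) m)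
        (by rw [show (s₁ : Wpos m) * sₘ = rot from rfl, rot_pow]; simp)
    have := pow_gcd_eq_one.2 ⟨hpow, by rw [mul_pow, hsq, hsq, one_mul]⟩
    rwa [Nat.Coprime.gcd_eq_one hodd.coprime_two_right, pow_one] at this
  have hm : l .sm = l .s1 := by
    rw [← one_mul (l .sm), ← hsq .s1, sq, mul_assoc, hrot, mul_one]
  refine ⟨l .s0, l .s1, hsq _, hsq _, repIso_of_linearIndependent hσ
    (v := ![x]) (linearIndependent_unique_iff.2 hx) fun y a => ?_⟩
  cases y <;> simp [Fintype.linearCombination_apply, rep1_apply, character, hl, hz, hm, smul_smul,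
    mul_comm]

section EigenvectorOfRot

variable {w : V} {t c e : ℂ}

lemma s₁_apply_s₁_apply (v : V) : σ s₁ (σ s₁ v) = v := by
  rw [← Module.End.mul_apply, ← _root_.map_mul, of_mul_self, _root_.map_one, Module.End.one_apply]

lemma sₘ_apply (hwr : σ rot w = t • w) : σ sₘ w = t • σ s₁ w := by
  rw [sₘ_eq_s₁_mul_rot, _root_.map_mul, Module.End.mul_apply, hwr, map_smul]

lemma rot_inv_apply (ht : t ≠ 0) (hwr : σ rot w = t • w) : σ rot⁻¹ w = t⁻¹ • w := by
  rw [eq_inv_smul_iff₀ ht, ← map_smul, ← hwr, ← Module.End.mul_apply, ← _root_.map_mul,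
    inv_mul_cancel, _root_.map_one, Module.End.one_apply]

lemma rot_apply_s₁_apply (ht : t ≠ 0) (hwr : σ rot w = t • w) :
    σ rot (σ s₁ w) = t⁻¹ • σ s₁ w := by
  rw [← Module.End.mul_apply, ← _root_.map_mul, rot_mul_s₁, _root_.map_mul, Module.End.mul_apply,
    rot_inv_apply ht hwr, map_smul]

lemma sₘ_apply_s₁_apply (ht : t ≠ 0) (hwr : σ rot w = t • w) : σ sₘ (σ s₁ w) = t⁻¹ • w := by
  rw [← Module.End.mul_apply, ← _root_.map_mul, ← rot_inv, rot_inv_apply ht hwr]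

lemma s₀_apply_s₁_apply (hws : σ s₀ w = c • w) (hz : ∀ v, σ z v = e • v) :
    σ s₀ (σ s₁ w) = (e * c) • σ s₁ w := by
  rw [← Module.End.mul_apply, ← _root_.map_mul, s₀_mul_s₁]
  simp only [_root_.map_mul, Module.End.mul_apply, hws, hz, map_smul, smul_smul]

lemma linearIndependent_s₁_apply (hno : ¬ HasCommonEigenvector σ) (hw : w ≠ 0)
    (hwr : σ rot w = t • w) (hws : σ s₀ w = c • w) (hz : ∀ v, σ z v = e • v) :
    LinearIndependent ℂ ![w, σ s₁ w] := by
  refine (LinearIndependent.pair_iff' hw).2 fun a ha => hno ⟨w, hw, ?_⟩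
  rintro (_ | _ | _ | _)
  exacts [⟨e, hz w⟩, ⟨c, hws⟩, ⟨a, ha.symm⟩, ⟨t * a, by rw [sₘ_apply hwr, ← ha, smul_smul]⟩]

lemma ne_one_of_z_eq_one (hno : ¬ HasCommonEigenvector σ) (hw : w ≠ 0)
    (hwr : σ rot w = t • w) (hws : σ s₀ w = c • w) (hz : ∀ v, σ z v = v) : t ≠ 1 := by
  rintro rfl
  have hz' (v : V) : σ z v = (1 : ℂ) • v := by rw [one_smul, hz]
  have hx : w + σ s₁ w ≠ 0 := by
    intro h0
    simpa using LinearIndependent.pair_iff.1 (linearIndependent_s₁_apply hno hw hwr hws hz') 1 1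
      (by simpa using h0)
  refine hno ⟨w + σ s₁ w, hx, ?_⟩
  rintro (_ | _ | _ | _)
  · exact ⟨1, by rw [hz, one_smul]⟩
  · exact ⟨c, by rw [map_add, hws, s₀_apply_s₁_apply hws hz', one_mul, smul_add]⟩
  · exact ⟨1, by rw [map_add, s₁_apply_s₁_apply, one_smul, add_comm]⟩
  · exact ⟨1, by rw [map_add, sₘ_apply hwr, sₘ_apply_s₁_apply one_ne_zero hwr, inv_one,
      one_smul, one_smul, one_smul, add_comm]⟩

lemma repIso_rep2 [NeZero m] (hσ : IsIrreducibleRep σ) (hno : ¬ HasCommonEigenvector σ)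
    (hw : w ≠ 0) {c' : ℂ} (ht : t ^ m = 1) (hc : c ^ 2 = 1) (hc' : c' ^ 2 = 1)
    (hwr : σ rot w = t • w) (hws : σ s₀ w = c • w) (hz : ∀ v, σ z v = (c * c') • v) :
    RepIso (rep2 t c c' ht hc hc') σ := by
  have ht₀ : t ≠ 0 := (IsUnit.of_pow_eq_one ht (NeZero.ne m)).ne_zero
  have hus : σ s₀ (σ s₁ w) = c' • σ s₁ w := by
    rw [s₀_apply_s₁_apply hws hz, mul_right_comm, ← sq, hc, one_mul]
  refine repIso_of_linearIndependent hσ (linearIndependent_s₁_apply hno hw hwr hws hz)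
    fun y v => ?_
  cases y <;>
    simp only [Fintype.linearCombination_apply, Fin.sum_univ_two, rep2_apply,
      matrixSolution_lift_z, matrixSolution_lift_s₀, matrixSolution_lift_s₁,
      matrixSolution_lift_sₘ, Matrix.mulVec_fin_two, Matrix.of_apply, Matrix.cons_val_zero,
      Matrix.cons_val_one, map_add, map_smul, hws, hus, hz, sₘ_apply hwr,
      sₘ_apply_s₁_apply ht₀ hwr, s₁_apply_s₁_apply] <;>
    module

end EigenvectorOfRot

end Representation

abbrev Index (m : ℕ) := (ℤˣ × ℤˣ) ⊕ (ℤˣ × Fin ((m - 1) / 2)) ⊕ Fin m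

def Index.dim : Index m → ℕ
  | .inl _ => 1
  | .inr _ => 2

lemma Index.dim_eq_one_or_two (i : Index m) : i.dim = 1 ∨ i.dim = 2 := by
  rcases i with _ | _
  exacts [.inl rfl, .inr rfl]

lemma card_index (hodd : Odd m) : Fintype.card (Index m) = 2 * m + 3 := by
  obtain ⟨p, rfl⟩ := hodd
  rw [Fintype.card_sum, Fintype.card_sum, Fintype.card_prod, Fintype.card_prod,
    Fintype.card_units_int, Fintype.card_fin, Fintype.card_fin]
  omega

lemma card_filter_dim_eq_one : (Finset.univ.filter fun i : Index m => i.dim = 1).card = 4 := by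
  rw [Finset.card_filter, Fintype.sum_sum_type, Fintype.sum_sum_type]
  simp [Index.dim, Fintype.card_units_int]

lemma card_filter_dim_eq_two (hodd : Odd m) :
    (Finset.univ.filter fun i : Index m => i.dim = 2).card = 2 * m - 1 := by
  obtain ⟨p, rfl⟩ := hodd
  rw [Finset.card_filter, Fintype.sum_sum_type, Fintype.sum_sum_type]
  simp only [Index.dim, OfNat.one_ne_ofNat, ↓reduceIte, Finset.sum_const_zero, Finset.sum_const,
    Finset.card_univ, Fintype.card_prod, Fintype.card_units_int, Fintype.card_fin, smul_eq_mul,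
    mul_one, zero_add]
  omega

variable [NeZero m] {ζ : ℂ}

noncomputable def irrRep (hζ : IsPrimitiveRoot ζ m) :
    (i : Index m) → Representation ℂ (Wpos m) (Fin i.dim → ℂ)
  | .inl (ε₀, ε₁) => rep1 ε₀ ε₁ (unitsInt_cast_sq ε₀) (unitsInt_cast_sq ε₁)
  | .inr (.inl (ε, k)) =>
    rep2 (ζ ^ (k.val + 1)) ε ε (hζ.pow_pow_eq_one _) (unitsInt_cast_sq ε) (unitsInt_cast_sq ε)
  | .inr (.inr k) => rep2 (ζ ^ k.val) 1 (-1) (hζ.pow_pow_eq_one _) (one_pow 2) neg_one_sq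

lemma irrRep_isIrreducible (hζ : IsPrimitiveRoot ζ m) (i : Index m) :
    IsIrreducibleRep (irrRep hζ i) := by
  rcases i with ⟨ε₀, ε₁⟩ | ⟨ε, k⟩ | k
  · exact isIrreducibleRep_of_finrank_eq_one (Module.finrank_fin_fun ℂ)
  · refine rep2_isIrreducible _ _ _ _ _ _ (.inr fun h => ?_)
    have h₁ := mul_inv_cancel₀ (pow_ne_zero (k.val + 1) (hζ.ne_zero (NeZero.ne m)))
    rw [← h, ← pow_add, hζ.pow_eq_one_iff_dvd] at h₁
    have := Nat.le_of_dvd (by omega) h₁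
    have := k.2
    omega
  · exact rep2_isIrreducible _ _ _ _ _ _ (.inl (by norm_num))

lemma irrRep_injective (hζ : IsPrimitiveRoot ζ m) {i j : Index m}
    (h : RepIso (irrRep hζ i) (irrRep hζ j)) : i = j := by
  have hdim : i.dim = j.dim := by simpa using h.finrank_eq
  rcases i with ⟨ε₀, ε₁⟩ | ⟨ε, k⟩ | k <;> rcases j with ⟨δ₀, δ₁⟩ | ⟨δ, l⟩ | l <;>
    simp only [Index.dim] at hdim <;> try omega
  · obtain ⟨h₀, h₁⟩ := eq_of_repIso_rep1 h
    simp only [Int.cast_inj, Units.val_inj] at h₀ h₁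
    rw [h₀, h₁]
  · obtain ⟨-, hs, ht, -⟩ := traces_eq_of_repIso_rep2 h
    have hεδ : ε = δ := by simpa [← two_mul, Units.val_inj] using hs
    rw [hεδ, Fin.ext (hζ.eq_of_pow_succ_add_inv_eq k.2 l.2 ht)]
  · obtain ⟨hz, -⟩ := traces_eq_of_repIso_rep2 h
    rw [← sq, unitsInt_cast_sq] at hz
    norm_num at hz
  · obtain ⟨hz, -⟩ := traces_eq_of_repIso_rep2 h
    rw [← sq, unitsInt_cast_sq] at hz
    norm_num at hz
  · obtain ⟨-, -, ht, ht'⟩ := traces_eq_of_repIso_rep2 h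
    have : ζ ^ k.val = ζ ^ l.val := by linear_combination (ht + ht') / 2
    rw [Fin.ext (hζ.pow_inj k.2 l.2 this)]

variable {V : Type*} [AddCommGroup V] [Module ℂ V] {σ : Representation ℂ (Wpos m) V}

lemma exists_repIso_irrRep_of_not_hasCommonEigenvector (hodd : Odd m) (hζ : IsPrimitiveRoot ζ m)
    (hσ : IsIrreducibleRep σ) (hno : ¬ HasCommonEigenvector σ) {w : V} (hw : w ≠ 0) {t c e : ℂ}
    (hwr : σ rot w = t • w) (hws : σ s₀ w = c • w) (hz : ∀ v, σ z v = e • v) :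
    ∃ i, RepIso (irrRep hζ i) σ := by
  have ht : t ^ m = 1 :=
    eq_of_apply_eq_smul hw (apply_pow_of_eq_smul hwr m) (by rw [rot_pow]; simp)
  have ht' : t⁻¹ ^ m = 1 := by rw [inv_pow, ht, inv_one]
  have hc : c ^ 2 = 1 :=
    eq_of_apply_eq_smul hw (apply_pow_of_eq_smul hws 2) (by rw [of_sq]; simp)
  have he : e ^ 2 = 1 :=
    eq_of_apply_eq_smul hw (apply_pow_of_eq_smul (hz w) 2) (by rw [of_sq]; simp)
  -- The first basis vector is `w` or `s₁ w`, whichever carries the normalised parameters.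
  have hu : σ s₁ w ≠ 0 := fun h => hw (by rw [← s₁_apply_s₁_apply w, h, map_zero])
  have hur := rot_apply_s₁_apply (IsUnit.of_pow_eq_one ht (NeZero.ne m)).ne_zero hwr
  have hus := s₀_apply_s₁_apply hws hz
  rcases sq_eq_one_iff.1 he with rfl | rfl
  · obtain ⟨ε, rfl⟩ := exists_unitsInt_cast_eq hc
    have hz' (v : V) : σ z v = ((ε : ℂ) * ε) • v := by rw [← sq, unitsInt_cast_sq, hz]
    obtain ⟨k, hk, h | h⟩ :=
      hζ.exists_pow_eq_or_inv_eq hodd ht (ne_one_of_z_eq_one hno hw hwr hws (by simpa using hz))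
    · exact ⟨.inr (.inl (ε, ⟨k, hk⟩)), repIso_rep2 hσ hno hw _ _ _ (h ▸ hwr) hws hz'⟩
    · exact ⟨.inr (.inl (ε, ⟨k, hk⟩)),
        repIso_rep2 hσ hno hu _ _ _ (h ▸ hur) (by simpa using hus) hz'⟩
  · rcases sq_eq_one_iff.1 hc with rfl | rfl
    · obtain ⟨k, hk, h⟩ := hζ.eq_pow_of_pow_eq_one ht
      exact ⟨.inr (.inr ⟨k, hk⟩), repIso_rep2 hσ hno hw _ _ _ (h ▸ hwr) hws (by simpa using hz)⟩
    · obtain ⟨k, hk, h⟩ := hζ.eq_pow_of_pow_eq_one ht'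
      exact ⟨.inr (.inr ⟨k, hk⟩),
        repIso_rep2 hσ hno hu _ _ _ (h ▸ hur) (by simpa using hus) (by simpa using hz)⟩

lemma exists_repIso_irrRep [FiniteDimensional ℂ V] (hodd : Odd m) (hζ : IsPrimitiveRoot ζ m)
    (hσ : IsIrreducibleRep σ) : ∃ i, RepIso (irrRep hζ i) σ := by
  by_cases h : HasCommonEigenvector σ
  · obtain ⟨a₀, a₁, h₀, h₁, hiso⟩ := exists_repIso_rep1 hodd hσ h
    obtain ⟨ε₀, rfl⟩ := exists_unitsInt_cast_eq h₀
    obtain ⟨ε₁, rfl⟩ := exists_unitsInt_cast_eq h₁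
    exact ⟨.inl (ε₀, ε₁), hiso⟩
  have := hσ.1
  obtain ⟨e, hz⟩ := exists_z_eq_smul hσ
  have hcomm : Commute (σ rot) (σ s₀) := by
    rw [Commute, SemiconjBy, ← _root_.map_mul, ← _root_.map_mul, s₀_mul_rot]
  obtain ⟨w, hw, t, c, hwr, hws⟩ := Module.End.exists_common_eigenvector hcomm
  exact exists_repIso_irrRep_of_not_hasCommonEigenvector hodd hζ hσ h hw hwr hws hz

end WposOdd

theorem WposOdd_irreps_general (m : ℕ) (hodd : Odd m) :
    ∃ (d : Fin (2 * m + 3) → ℕ)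
      (ρ : ∀ i : Fin (2 * m + 3), Representation ℂ (PresentedGroup (relsOddPos m))
        (Fin (d i) → ℂ)),
      (∀ i, IsIrreducibleRep (ρ i)) ∧
      (∀ i j, i ≠ j → ¬ RepIso (ρ i) (ρ j)) ∧
      (∀ (V : Type*) [AddCommGroup V] [Module ℂ V]
        (σ : Representation ℂ (PresentedGroup (relsOddPos m)) V),
        FiniteDimensional ℂ V → IsIrreducibleRep σ →
          (Module.finrank ℂ V = 1 ∨ Module.finrank ℂ V = 2) ∧ ∃ i, RepIso (ρ i) σ) ∧
      (∀ i, d i = 1 ∨ d i = 2) ∧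
      (Finset.univ.filter fun i => d i = 1).card = 4 ∧
      (Finset.univ.filter fun i => d i = 2).card = 2 * m - 1 := by
  have : NeZero m := ⟨hodd.pos.ne'⟩
  have hζ := Complex.isPrimitiveRoot_exp m (NeZero.ne m)
  let E := Fintype.equivFinOfCardEq (WposOdd.card_index hodd)
  refine ⟨fun i => (E.symm i).dim, fun i => WposOdd.irrRep hζ (E.symm i),
    fun i => WposOdd.irrRep_isIrreducible hζ _,
    fun i j hij h => hij (E.symm.injective (WposOdd.irrRep_injective hζ h)),
    fun V _ _ σ _ hσ => ?_, fun i => (E.symm i).dim_eq_one_or_two, ?_, ?_⟩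
  · obtain ⟨i, hi⟩ := WposOdd.exists_repIso_irrRep hodd hζ hσ
    refine ⟨by rw [← hi.finrank_eq, Module.finrank_fin_fun]; exact i.dim_eq_one_or_two, E i, ?_⟩
    show RepIso (WposOdd.irrRep hζ (E.symm (E i))) σ
    rwa [E.symm_apply_apply]
  · rw [← WposOdd.card_filter_dim_eq_one (m := m)]
    exact Finset.card_equiv E.symm (by simp)
  · rw [← WposOdd.card_filter_dim_eq_two hodd]
    exact Finset.card_equiv E.symm (by simp)

/-- For odd `m ≥ 3`, the positive double covering `Ŵ⁺` of `ℤ₂ × D_{2m}` has, up to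
isomorphism, exactly `2m + 3` irreducible finite-dimensional complex representations;
every such representation has dimension `1` or `2`, exactly `4` of them have
dimension `1` and exactly `2m − 1` of them have dimension `2`. -/
theorem WposOdd_irreps (m : ℕ) (hm : 3 ≤ m) (hodd : Odd m) :
    ∃ (d : Fin (2 * m + 3) → ℕ)
      (ρ : ∀ i : Fin (2 * m + 3), Representation ℂ (PresentedGroup (relsOddPos m))
        (Fin (d i) → ℂ)),
      (∀ i, IsIrreducibleRep (ρ i)) ∧
      (∀ i j, i ≠ j → ¬ RepIso (ρ i) (ρ j)) ∧
      (∀ (V : Type*) [AddCommGroup V] [Module ℂ V]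
        (σ : Representation ℂ (PresentedGroup (relsOddPos m)) V),
        FiniteDimensional ℂ V → IsIrreducibleRep σ →
          (Module.finrank ℂ V = 1 ∨ Module.finrank ℂ V = 2) ∧ ∃ i, RepIso (ρ i) σ) ∧
      (∀ i, d i = 1 ∨ d i = 2) ∧
      (Finset.univ.filter fun i => d i = 1).card = 4 ∧
      (Finset.univ.filter fun i => d i = 2).card = 2 * m - 1 :=
  WposOdd_irreps_general m hodd
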